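/- Let X_{1:n} ≤ ... ≤ X_{n:n} be order statistics from n i.i.d. HLG(θ) random variables. The moment generating function of the r-th order statistic satisfies, for |t| small enough, M_{r:n}(t) = (n!/((r−1)!(n−r)!)) Σ_{u=0}^{r−1} (−1)^u C(r−1,u) (2/(2−θ))^{n−r+u+1} (θ/(2−θ))^{−t} B(1 − θ/2; n−r+u+1−t, 1+t). -/

import Mathlib

/-!
With `u = (2 - θ)/2 · (1 - F(x))` one has `1 - F = 2/(2 - θ) · u`, `f dx = -2/(2 - θ) du` and
`e^{-x} = θ/(2 - θ) · u/(1 - u)`, while `x ↦ u` maps `(0, ∞)` decreasingly onto `(0, 1 - θ/2)`.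
Hence `∫ e^{tx} (1 - F)^k f dx = (2/(2 - θ))^(k+1) (θ/(2 - θ))^(-t) B(1 - θ/2; k + 1 - t, 1 + t)`
for `t < k + 1`, and the theorem follows by expanding `F^(r-1) = (1 - (1 - F))^(r-1)` binomially.
-/

open MeasureTheory Real

/-- The incomplete beta function `B(z; a, b) = ∫₀^z u^(a-1) (1-u)^(b-1) du`. -/
noncomputable def incBeta (z a b : ℝ) : ℝ :=
  ∫ u in (0 : ℝ)..z, u ^ (a - 1) * (1 - u) ^ (b - 1)

/-- The HLG(θ) cdf. -/
noncomputable def hlgCdf (θ x : ℝ) : ℝ :=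
  θ * (1 - Real.exp (-x)) / (θ + (2 - θ) * Real.exp (-x))

/-- The HLG(θ) pdf. -/
noncomputable def hlgPdf (θ x : ℝ) : ℝ :=
  2 * θ * Real.exp (-x) / (θ + (2 - θ) * Real.exp (-x)) ^ 2

open Finset Set

theorem pow_eq_sum_range_choose_one_sub_pow {R : Type*} [CommRing R] (y : R) (m : ℕ) :
    y ^ m = ∑ u ∈ range (m + 1), (-1) ^ u * (m.choose u : R) * (1 - y) ^ u := by
  conv_lhs => rw [show y = -(1 - y) + 1 by ring, add_pow]
  refine sum_congr rfl fun u _ => ?_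
  rw [neg_pow, one_pow, mul_one]
  ring

theorem integrableOn_rpow_mul_one_sub_rpow {a z : ℝ} (ha : 0 < a) (hz : z < 1) (b : ℝ) :
    IntegrableOn (fun u : ℝ => u ^ (a - 1) * (1 - u) ^ (b - 1)) (Ioo 0 z) := by
  rcases le_or_gt z 0 with hz0 | hz0
  · simp [Ioo_eq_empty_of_le hz0]
  have hpow : IntegrableOn (fun u : ℝ => u ^ (a - 1)) (Icc 0 z) :=
    (intervalIntegrable_iff_integrableOn_Icc_of_le hz0.le).1
      (intervalIntegral.intervalIntegrable_rpow' (by linarith))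
  refine (hpow.mono_set Ioo_subset_Icc_self).mul_continuousOn_of_subset ?_ measurableSet_Ioo
    isCompact_Icc Ioo_subset_Icc_self
  exact (continuousOn_const.sub continuousOn_id).rpow_const
    fun u hu => Or.inl (sub_pos.2 (hu.2.trans_lt hz)).ne'

theorem incBeta_eq_integral_Ioo {z : ℝ} (hz : 0 ≤ z) (a b : ℝ) :
    incBeta z a b = ∫ u in Ioo 0 z, u ^ (a - 1) * (1 - u) ^ (b - 1) := by
  rw [incBeta, intervalIntegral.integral_of_le hz, integral_Ioc_eq_integral_Ioo]

section
variable {θ : ℝ}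

theorem hlg_denom_pos (hθ0 : 0 < θ) (hθ2 : θ < 2) (x : ℝ) : 0 < θ + (2 - θ) * exp (-x) := by
  have := exp_pos (-x)
  nlinarith

theorem hlgPdf_pos (hθ0 : 0 < θ) (hθ2 : θ < 2) (x : ℝ) : 0 < hlgPdf θ x := by
  have := hlg_denom_pos hθ0 hθ2 x
  unfold hlgPdf
  positivity

theorem hasDerivAt_hlgCdf (hθ0 : 0 < θ) (hθ2 : θ < 2) (x : ℝ) :
    HasDerivAt (hlgCdf θ) (hlgPdf θ x) x := by
  have hD := (hlg_denom_pos hθ0 hθ2 x).ne'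
  have he : HasDerivAt (fun x => exp (-x)) (-exp (-x)) x := by
    simpa using (hasDerivAt_neg x).exp
  have h := ((he.const_sub 1).const_mul θ).div ((he.const_mul (2 - θ)).const_add θ) hD
  refine h.congr_deriv ?_
  unfold hlgPdf
  field_simp
  ring

theorem hlgCdf_zero : hlgCdf θ 0 = 0 := by
  simp [hlgCdf]

noncomputable def hlgSubst (θ x : ℝ) : ℝ := (2 - θ) / 2 * (1 - hlgCdf θ x)

theorem hlgSubst_eq (hθ0 : 0 < θ) (hθ2 : θ < 2) (x : ℝ) :
    hlgSubst θ x = (2 - θ) * exp (-x) / (θ + (2 - θ) * exp (-x)) := by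
  have hD := (hlg_denom_pos hθ0 hθ2 x).ne'
  unfold hlgSubst hlgCdf
  field_simp
  ring

theorem one_sub_hlgSubst (hθ0 : 0 < θ) (hθ2 : θ < 2) (x : ℝ) :
    1 - hlgSubst θ x = θ / (θ + (2 - θ) * exp (-x)) := by
  have hD := (hlg_denom_pos hθ0 hθ2 x).ne'
  rw [hlgSubst_eq hθ0 hθ2]
  field_simp
  ring

theorem exp_neg_eq_hlgSubst (hθ0 : 0 < θ) (hθ2 : θ < 2) (x : ℝ) :
    exp (-x) = θ / (2 - θ) * (hlgSubst θ x / (1 - hlgSubst θ x)) := by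
  have hD := (hlg_denom_pos hθ0 hθ2 x).ne'
  have h2θ : 2 - θ ≠ 0 := by linarith
  rw [one_sub_hlgSubst hθ0 hθ2, hlgSubst_eq hθ0 hθ2, div_div_div_cancel_right₀ hD]
  field_simp

theorem hasDerivAt_hlgSubst (hθ0 : 0 < θ) (hθ2 : θ < 2) (x : ℝ) :
    HasDerivAt (hlgSubst θ) (-((2 - θ) / 2 * hlgPdf θ x)) x :=
  (((hasDerivAt_hlgCdf hθ0 hθ2 x).const_sub 1).const_mul ((2 - θ) / 2)).congr_deriv
    (by ring)

theorem strictAnti_hlgSubst (hθ0 : 0 < θ) (hθ2 : θ < 2) : StrictAnti (hlgSubst θ) := by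
  refine strictAnti_of_deriv_neg fun x => ?_
  rw [(hasDerivAt_hlgSubst hθ0 hθ2 x).deriv, neg_lt_zero]
  have := hlgPdf_pos hθ0 hθ2 x
  have : 0 < 2 - θ := by linarith
  positivity

theorem hlgSubst_image_Ioi (hθ0 : 0 < θ) (hθ2 : θ < 2) :
    hlgSubst θ '' Ioi 0 = Ioo 0 (1 - θ / 2) := by
  apply Set.Subset.antisymm
  · rintro _ ⟨x, hx, rfl⟩
    have hD := hlg_denom_pos hθ0 hθ2 x
    have h2θ : 0 < 2 - θ := by linarith
    refine ⟨by rw [hlgSubst_eq hθ0 hθ2]; positivity, ?_⟩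
    calc hlgSubst θ x < hlgSubst θ 0 := strictAnti_hlgSubst hθ0 hθ2 hx
      _ = 1 - θ / 2 := by rw [hlgSubst, hlgCdf_zero]; ring
  · rintro y ⟨hy0, hy1⟩
    have hy1' : θ * y < (2 - θ) * (1 - y) := by nlinarith
    have hq : 0 < θ * y := by positivity
    refine ⟨log ((2 - θ) * (1 - y) / (θ * y)), log_pos ((one_lt_div hq).2 hy1'), ?_⟩
    have h2θ : 0 < 2 - θ := by linarith
    have h1y : 0 < 1 - y := by linarith
    rw [hlgSubst_eq hθ0 hθ2, exp_neg, exp_log (by positivity)]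
    field_simp
    ring

theorem exp_mul_one_sub_hlgCdf_pow_mul_hlgPdf (hθ0 : 0 < θ) (hθ2 : θ < 2) (k : ℕ) (t x : ℝ) :
    exp (t * x) * ((1 - hlgCdf θ x) ^ k * hlgPdf θ x) =
      (2 / (2 - θ)) ^ (k + 1) * (θ / (2 - θ)) ^ (-t) *
        (|-((2 - θ) / 2 * hlgPdf θ x)| •
          (hlgSubst θ x ^ (((k + 1 : ℕ) : ℝ) - t - 1) * (1 - hlgSubst θ x) ^ (1 + t - 1))) := by
  have h2θ : 0 < 2 - θ := by linarith
  have hD := hlg_denom_pos hθ0 hθ2 x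
  have hu0 : 0 < hlgSubst θ x := by rw [hlgSubst_eq hθ0 hθ2]; positivity
  have hu1 : 0 < 1 - hlgSubst θ x := by rw [one_sub_hlgSubst hθ0 hθ2]; positivity
  set u := hlgSubst θ x
  have hF : 1 - hlgCdf θ x = 2 / (2 - θ) * u := by
    simp only [u, hlgSubst]; field_simp
  have hexp : exp (t * x) = (θ / (2 - θ)) ^ (-t) * (u ^ (-t) * (1 - u) ^ t) := by
    rw [show t * x = -x * -t by ring, exp_mul, exp_neg_eq_hlgSubst hθ0 hθ2,
      mul_rpow (by positivity) (by positivity), div_rpow hu0.le hu1.le, rpow_neg hu1.le,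
      div_inv_eq_mul]
  have hpow : u ^ (((k + 1 : ℕ) : ℝ) - t - 1) = u ^ k * u ^ (-t) := by
    rw [← rpow_natCast, ← rpow_add hu0]; push_cast; ring_nf
  have hf := hlgPdf_pos hθ0 hθ2 x
  rw [hexp, hpow, show (1 : ℝ) + t - 1 = t by ring, hF, abs_neg, abs_of_pos (by positivity),
    smul_eq_mul, mul_pow, pow_succ]
  have hc : 2 / (2 - θ) * ((2 - θ) / 2) = 1 := by field_simp
  linear_combination -((θ / (2 - θ)) ^ (-t) * u ^ (-t) * (1 - u) ^ t * (2 / (2 - θ)) ^ k * u ^ k *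
    hlgPdf θ x) * hc

theorem integrableOn_exp_mul_one_sub_hlgCdf_pow_mul_hlgPdf (hθ0 : 0 < θ) (hθ2 : θ < 2)
    {k : ℕ} {t : ℝ} (ht : t < k + 1) :
    IntegrableOn (fun x => exp (t * x) * ((1 - hlgCdf θ x) ^ k * hlgPdf θ x)) (Ioi 0) := by
  have hbeta := integrableOn_rpow_mul_one_sub_rpow (a := ((k + 1 : ℕ) : ℝ) - t)
    (by push_cast; linarith) (show 1 - θ / 2 < 1 by linarith) (1 + t)
  rw [← hlgSubst_image_Ioi hθ0 hθ2, integrableOn_image_iff_integrableOn_abs_deriv_smul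
    measurableSet_Ioi (fun x _ => (hasDerivAt_hlgSubst hθ0 hθ2 x).hasDerivWithinAt)
    (strictAnti_hlgSubst hθ0 hθ2).injective.injOn] at hbeta
  simp_rw [exp_mul_one_sub_hlgCdf_pow_mul_hlgPdf hθ0 hθ2 k t]
  exact hbeta.const_mul _

theorem integral_exp_mul_one_sub_hlgCdf_pow_mul_hlgPdf (hθ0 : 0 < θ) (hθ2 : θ < 2) (k : ℕ)
    (t : ℝ) :
    ∫ x in Ioi 0, exp (t * x) * ((1 - hlgCdf θ x) ^ k * hlgPdf θ x) =
      (2 / (2 - θ)) ^ (k + 1) * (θ / (2 - θ)) ^ (-t) *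
        incBeta (1 - θ / 2) ((k + 1 : ℕ) - t) (1 + t) := by
  simp_rw [exp_mul_one_sub_hlgCdf_pow_mul_hlgPdf hθ0 hθ2 k t]
  rw [integral_const_mul, incBeta_eq_integral_Ioo (by linarith), ← hlgSubst_image_Ioi hθ0 hθ2,
    integral_image_eq_integral_abs_deriv_smul measurableSet_Ioi
      (fun x _ => (hasDerivAt_hlgSubst hθ0 hθ2 x).hasDerivWithinAt)
      (strictAnti_hlgSubst hθ0 hθ2).injective.injOn]

end

theorem hlg_order_statistic_mgf_general (θ : ℝ) (hθ0 : 0 < θ) (hθ1 : θ < 1)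
    (n r : ℕ) (hr : 1 ≤ r) :
    ∃ ε > (0 : ℝ), ∀ t : ℝ, |t| < ε →
      ∫ x in Set.Ioi (0 : ℝ),
          Real.exp (t * x) *
            ((Nat.factorial n / (Nat.factorial (r - 1) * Nat.factorial (n - r)) : ℝ) *
              hlgCdf θ x ^ (r - 1) * (1 - hlgCdf θ x) ^ (n - r) * hlgPdf θ x) =
        (Nat.factorial n / (Nat.factorial (r - 1) * Nat.factorial (n - r)) : ℝ) *
          ∑ u ∈ Finset.range r,
            (-1 : ℝ) ^ u * (Nat.choose (r - 1) u : ℝ) *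
              (2 / (2 - θ)) ^ (n - r + u + 1) * (θ / (2 - θ)) ^ (-t) *
              incBeta (1 - θ / 2) ((n - r + u + 1 : ℕ) - t) (1 + t) := by
  refine ⟨1, one_pos, fun t ht => ?_⟩
  have hθ2 : θ < 2 := by linarith
  have ht' (k : ℕ) : t < k + 1 := by linarith [(abs_lt.1 ht).2, (k.cast_nonneg : (0 : ℝ) ≤ k)]
  set C : ℝ := n.factorial / ((r - 1).factorial * (n - r).factorial)
  have hexpand (x : ℝ) :
      exp (t * x) * (C * hlgCdf θ x ^ (r - 1) * (1 - hlgCdf θ x) ^ (n - r) * hlgPdf θ x) =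
        ∑ u ∈ range r, C * ((-1) ^ u * ((r - 1).choose u : ℝ)) *
          (exp (t * x) * ((1 - hlgCdf θ x) ^ (n - r + u) * hlgPdf θ x)) := by
    rw [pow_eq_sum_range_choose_one_sub_pow, Nat.sub_add_cancel hr, mul_sum, sum_mul, sum_mul,
      mul_sum]
    refine sum_congr rfl fun u _ => ?_
    ring
  simp_rw [hexpand]
  rw [integral_finsetSum _ fun u _ =>
      (integrableOn_exp_mul_one_sub_hlgCdf_pow_mul_hlgPdf hθ0 hθ2 (ht' _)).const_mul _,
    mul_sum]
  refine sum_congr rfl fun u _ => ?_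
  rw [integral_const_mul, integral_exp_mul_one_sub_hlgCdf_pow_mul_hlgPdf hθ0 hθ2 _ t]
  ring

theorem hlg_order_statistic_mgf (θ : ℝ) (hθ0 : 0 < θ) (hθ1 : θ < 1)
    (n r : ℕ) (hr : 1 ≤ r) (hrn : r ≤ n) :
    ∃ ε > (0 : ℝ), ∀ t : ℝ, |t| < ε →
      ∫ x in Set.Ioi (0 : ℝ),
          Real.exp (t * x) *
            ((Nat.factorial n / (Nat.factorial (r - 1) * Nat.factorial (n - r)) : ℝ) *
              hlgCdf θ x ^ (r - 1) * (1 - hlgCdf θ x) ^ (n - r) * hlgPdf θ x) =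
        (Nat.factorial n / (Nat.factorial (r - 1) * Nat.factorial (n - r)) : ℝ) *
          ∑ u ∈ Finset.range r,
            (-1 : ℝ) ^ u * (Nat.choose (r - 1) u : ℝ) *
              (2 / (2 - θ)) ^ (n - r + u + 1) * (θ / (2 - θ)) ^ (-t) *
              incBeta (1 - θ / 2) ((n - r + u + 1 : ℕ) - t) (1 + t) :=
  hlg_order_statistic_mgf_general θ hθ0 hθ1 n r hr
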